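/- Let D be a Steiner triple system on v points (a (v,3,1)-design). Then γ(D) ≥ ⌈2v/3⌉ - 1. -/

import Mathlib

/-!
Let `S` be a dominating set of the incidence graph, `P` its points, `b` its number of blocks
and `q = v - |P|`. Every point outside `P` lies on a block of `S`, so `q ≤ 3b`. Every block
missing `P` must itself be in `S`. Counting ordered pairs of points outside `P` by the unique
block through them, a block meeting `P` in `a ≥ 1` points contributes at most `a (3 - a)`,
which sums to `|P| q` over all blocks, while a block missing `P` contributes `6`; hence
`q (q - 1) ≤ 6b + |P| q`. These two inequalities force `2q ≤ |P| + 3b + 3`,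
i.e. `2v ≤ 3|S| + 3`.
-/

open Finset

variable {α ι : Type*}

/-- The incidence (Levi) graph of the block family `B` indexed by `ι` over point set `α`:
a bipartite graph where point `p` is adjacent to block `i` iff `p ∈ B i`. -/
def incGraph (B : ι → Finset α) : SimpleGraph (α ⊕ ι) where
  Adj x y :=
    (∃ p i, x = Sum.inl p ∧ y = Sum.inr i ∧ p ∈ B i) ∨
    (∃ p i, x = Sum.inr i ∧ y = Sum.inl p ∧ p ∈ B i)
  symm := by
    constructor
    rintro x y (⟨p, i, rfl, rfl, h⟩ | ⟨p, i, rfl, rfl, h⟩)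
    · exact Or.inr ⟨p, i, rfl, rfl, h⟩
    · exact Or.inl ⟨p, i, rfl, rfl, h⟩
  loopless := by
    constructor
    rintro x (⟨p, i, rfl, h, -⟩ | ⟨p, i, rfl, h, -⟩) <;> simp at h

/-- A dominating set of vertices in a graph: every vertex not in `S` has a neighbour in `S`. -/
def IsDomSet {V : Type*} (G : SimpleGraph V) (S : Finset V) : Prop :=
  ∀ v ∉ S, ∃ s ∈ S, G.Adj v s

/-- The domination number of a graph: the minimum size of a dominating set. -/
noncomputable def domNum {V : Type*} (G : SimpleGraph V) : ℕ :=
  sInf {n | ∃ S : Finset V, IsDomSet G S ∧ S.card = n}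

section Incidence

variable {B : ι → Finset α}

@[simp] lemma incGraph_adj_inl_inr {p : α} {i : ι} :
    (incGraph B).Adj (.inl p) (.inr i) ↔ p ∈ B i := by
  simp [incGraph]

@[simp] lemma incGraph_adj_inr_inl {p : α} {i : ι} :
    (incGraph B).Adj (.inr i) (.inl p) ↔ p ∈ B i := by
  simp [incGraph]

@[simp] lemma incGraph_not_adj_inl_inl {p q : α} : ¬ (incGraph B).Adj (.inl p) (.inl q) := by
  simp [incGraph]

@[simp] lemma incGraph_not_adj_inr_inr {i j : ι} : ¬ (incGraph B).Adj (.inr i) (.inr j) := by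
  simp [incGraph]

end Incidence

namespace IsDomSet

variable {B : ι → Finset α} {S : Finset (α ⊕ ι)}

lemma mem_biUnion_toRight [DecidableEq α] (hS : IsDomSet (incGraph B) S) {p : α}
    (hp : p ∉ S.toLeft) : p ∈ S.toRight.biUnion B := by
  obtain ⟨s | i, hs, hadj⟩ := hS (.inl p) (by simpa using hp)
  · simp at hadj
  · exact mem_biUnion.2 ⟨i, by simpa using hs, by simpa using hadj⟩

lemma mem_toRight_of_disjoint (hS : IsDomSet (incGraph B) S) {i : ι}
    (hi : Disjoint (B i) S.toLeft) : i ∈ S.toRight := by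
  by_contra h
  obtain ⟨s | j, hs, hadj⟩ := hS (.inr i) (by simpa using h)
  · exact disjoint_left.1 hi (by simpa using hadj) (by simpa using hs)
  · simp at hadj

end IsDomSet

section PairCounting

variable [Fintype ι] [DecidableEq α] {B : ι → Finset α}

lemma sum_card_filter_pairs_eq_card
    (hpair : ∀ x y : α, x ≠ y →
      (Finset.univ.filter fun i => x ∈ B i ∧ y ∈ B i).card = 1)
    (T : Finset (α × α)) (hT : ∀ z ∈ T, z.1 ≠ z.2) :
    ∑ i, #{z ∈ T | z.1 ∈ B i ∧ z.2 ∈ B i} = #T := by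
  have := sum_card_bipartiteAbove_eq_sum_card_bipartiteBelow (s := univ) (t := T)
    (r := fun i (z : α × α) => z.1 ∈ B i ∧ z.2 ∈ B i)
  simp only [bipartiteAbove, bipartiteBelow] at this
  rw [this, card_eq_sum_ones T]
  exact sum_congr rfl fun z hz => hpair z.1 z.2 (hT z hz)

lemma sum_card_offDiag_inter
    (hpair : ∀ x y : α, x ≠ y →
      (Finset.univ.filter fun i => x ∈ B i ∧ y ∈ B i).card = 1)
    (Q : Finset α) :
    ∑ i, #(B i ∩ Q).offDiag = #Q.offDiag := by
  rw [← sum_card_filter_pairs_eq_card hpair Q.offDiag fun z hz => (mem_offDiag.1 hz).2.2]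
  refine sum_congr rfl fun i _ => congrArg card ?_
  ext z
  simp only [mem_offDiag, mem_filter, mem_inter]
  tauto

lemma sum_card_inter_mul_card_inter
    (hpair : ∀ x y : α, x ≠ y →
      (Finset.univ.filter fun i => x ∈ B i ∧ y ∈ B i).card = 1)
    {P Q : Finset α} (hPQ : Disjoint P Q) :
    ∑ i, #(B i ∩ P) * #(B i ∩ Q) = #P * #Q := by
  have hne : ∀ z ∈ P ×ˢ Q, z.1 ≠ z.2 := by
    rintro ⟨x, y⟩ hz (rfl : x = y)
    exact disjoint_left.1 hPQ (mem_product.1 hz).1 (mem_product.1 hz).2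
  rw [← card_product, ← sum_card_filter_pairs_eq_card hpair (P ×ˢ Q) hne]
  refine sum_congr rfl fun i _ => ?_
  rw [← card_product]
  congr 1
  ext z
  simp only [mem_product, mem_filter, mem_inter]
  tauto

end PairCounting

lemma two_mul_le_of_le_three_mul_of_mul_sub_le {p q b : ℕ} (hcover : q ≤ 3 * b)
    (hpairs : q * q - q ≤ 6 * b + p * q) : 2 * q ≤ p + 3 * b + 3 := by
  rcases le_or_gt q (p + 3) with hq | hq
  · omega
  · zify [Nat.le_mul_self q] at hpairs ⊢
    -- `hpairs` says `q * d ≤ 6 * b` for `d = q - p - 1`, and `(q - 2) * (d - 2) ≥ 0`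
    have : (0 : ℤ) ≤ (q - 2) * (q - p - 3) := mul_nonneg (by omega) (by omega)
    linarith

lemma card_inter_compl_offDiag_le [Fintype α] [DecidableEq α] {K : Finset α} (hK : #K = 3)
    (P : Finset α) :
    #(K ∩ Pᶜ).offDiag ≤ (if Disjoint K P then 6 else 0) + #(K ∩ P) * #(K ∩ Pᶜ) := by
  have hsplit : #(K ∩ P) + #(K ∩ Pᶜ) = 3 := by
    rw [← hK, ← sdiff_eq_inter_compl, card_inter_add_card_sdiff]
  have hdisj : Disjoint K P ↔ #(K ∩ P) = 0 := by
    rw [card_eq_zero, disjoint_iff_inter_eq_empty]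
  rw [offDiag_card, if_congr hdisj rfl rfl]
  generalize #(K ∩ P) = a, #(K ∩ Pᶜ) = c at hsplit ⊢
  obtain ⟨ha, hc⟩ : a ≤ 3 ∧ c ≤ 3 := by omega
  interval_cases a <;> interval_cases c <;> simp_all

section SteinerTripleSystem

variable [Fintype α] [Fintype ι] [DecidableEq α] {B : ι → Finset α}

lemma card_compl_offDiag_le (hblock : ∀ i, #(B i) = 3)
    (hpair : ∀ x y : α, x ≠ y →
      (Finset.univ.filter fun i => x ∈ B i ∧ y ∈ B i).card = 1)
    (P : Finset α) :
    #Pᶜ.offDiag ≤ 6 * #{i | Disjoint (B i) P} + #P * #Pᶜ := by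
  rw [← sum_card_offDiag_inter hpair,
    ← sum_card_inter_mul_card_inter hpair disjoint_compl_right, card_filter, mul_sum,
    ← sum_add_distrib]
  refine sum_le_sum fun i _ => ?_
  simpa [mul_ite] using card_inter_compl_offDiag_le (hblock i) P

lemma IsDomSet.two_mul_card_le (hblock : ∀ i, #(B i) = 3)
    (hpair : ∀ x y : α, x ≠ y →
      (Finset.univ.filter fun i => x ∈ B i ∧ y ∈ B i).card = 1)
    {S : Finset (α ⊕ ι)} (hS : IsDomSet (incGraph B) S) :
    2 * Fintype.card α ≤ 3 * #S + 3 := by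
  set P := S.toLeft
  have hcover : #Pᶜ ≤ 3 * #S.toRight :=
    calc #Pᶜ ≤ #(S.toRight.biUnion B) := card_le_card fun p hp =>
          hS.mem_biUnion_toRight (mem_compl.1 hp)
      _ ≤ ∑ i ∈ S.toRight, #(B i) := card_biUnion_le
      _ = 3 * #S.toRight := by simp [hblock, mul_comm]
  have hpairs : #Pᶜ * #Pᶜ - #Pᶜ ≤ 6 * #S.toRight + #P * #Pᶜ := by
    rw [← offDiag_card]
    refine (card_compl_offDiag_le hblock hpair P).trans ?_
    gcongr
    exact fun i hi => hS.mem_toRight_of_disjoint (mem_filter.1 hi).2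
  have hq := two_mul_le_of_le_three_mul_of_mul_sub_le hcover hpairs
  have hv : #P + #Pᶜ = Fintype.card α := card_add_card_compl P
  have hcard : #P + #S.toRight = #S := card_toLeft_add_card_toRight
  omega

end SteinerTripleSystem

theorem stmt13_general [Fintype α] [Fintype ι] [DecidableEq α]
    (B : ι → Finset α) (v : ℕ)
    (hv : Fintype.card α = v)
    (hblock : ∀ i, (B i).card = 3)
    (hpair : ∀ x y : α, x ≠ y →
      (Finset.univ.filter fun i => x ∈ B i ∧ y ∈ B i).card = 1) :
    (2 * v) ⌈/⌉ 3 - 1 ≤ domNum (incGraph B) := by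
  refine le_csInf ⟨_, univ, fun x hx => absurd (mem_univ x) hx, rfl⟩ ?_
  rintro _ ⟨S, hS, rfl⟩
  have hcard := hS.two_mul_card_le hblock hpair
  rw [Nat.ceilDiv_eq_add_pred_div]
  omega

/-- For a Steiner triple system on `v` points (a `(v,3,1)`-design),
`γ(D) ≥ ⌈2v/3⌉ - 1`. -/
theorem stmt13 [Fintype α] [Fintype ι] [DecidableEq α]
    (B : ι → Finset α) (v : ℕ)
    (hv : Fintype.card α = v) (hkv : 3 < v)
    (hblock : ∀ i, (B i).card = 3)
    (hpair : ∀ x y : α, x ≠ y →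
      (Finset.univ.filter fun i => x ∈ B i ∧ y ∈ B i).card = 1) :
    (2 * v) ⌈/⌉ 3 - 1 ≤ domNum (incGraph B) :=
  stmt13_general B v hv hblock hpair
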